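/- arXiv:2511.03142 — 2 statements merged into one kernel-verified Lean document; each statement's English description precedes it below -/
import Mathlib

section
/- Under Assumptions 1 and 2, the unique fixed point c* ∈ 𝒞 of the time iteration operator T satisfies: for every z ∈ Z, both the optimal consumption function w ↦ c*(w,z) and the optimal savings function w ↦ w − c*(w,z) are increasing on (0,∞). -/
open MeasureTheory Set Filter
open scoped ENNReal

/-- Spectral radius of a real square matrix: the maximum modulus of its
complex eigenvalues (roots of the characteristic polynomial over `ℂ`). -/
noncomputable def specRad {n : Type} [Fintype n] [DecidableEq n] (A : Matrix n n ℝ) : ℝ :=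
  sSup {x : ℝ | ∃ μ : ℂ, (A.map (fun a : ℝ => (a : ℂ))).charpoly.IsRoot μ ∧ x = ‖μ‖}

/-- The optimal savings model with preference shocks: a finite Markov state
space `Z`, innovation space `E` with probability measure `π`, discount factor,
return and income functions `β, R, Y`, and a utility `u` satisfying
Assumption 1 (where `u'`, `u''` are the first and second derivatives). -/
structure SavingsModel (Z : Type) (E : Type) [Fintype Z] [MeasurableSpace E] where
  P : Z → Z → ℝ
  π : Measure E
  π_prob : IsProbabilityMeasure π
  β : Z → Z → E → ℝ
  R : Z → Z → E → ℝ
  Y : Z → Z → E → ℝ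
  β_nonneg : ∀ z zh ε, 0 ≤ β z zh ε
  R_nonneg : ∀ z zh ε, 0 ≤ R z zh ε
  Y_nonneg : ∀ z zh ε, 0 ≤ Y z zh ε
  β_meas : ∀ z zh, Measurable (β z zh)
  R_meas : ∀ z zh, Measurable (R z zh)
  Y_meas : ∀ z zh, Measurable (Y z zh)
  P_nonneg : ∀ z zh, 0 ≤ P z zh
  P_rowsum : ∀ z, ∑ zh, P z zh = 1
  u : ℝ → Z → ℝ
  u' : ℝ → Z → ℝ
  u'' : ℝ → Z → ℝ
  u_deriv : ∀ z, ∀ c : ℝ, 0 < c → HasDerivAt (fun x => u x z) (u' c z) c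
  u'_deriv : ∀ z, ∀ c : ℝ, 0 < c → HasDerivAt (fun x => u' x z) (u'' c z) c
  u'_pos : ∀ z, ∀ c : ℝ, 0 < c → 0 < u' c z
  u''_neg : ∀ z, ∀ c : ℝ, 0 < c → u'' c z < 0
  u'_infty : ∀ z, Tendsto (fun c => u' c z) (nhdsWithin 0 (Ioi 0)) atTop
  u'_lt_one : ∀ z, ∀ᶠ c in atTop, u' c z < 1

namespace SavingsModel

variable {Z E : Type} [Fintype Z] [MeasurableSpace E] (M : SavingsModel Z E)

/-- The conditional expectation operator `E_z[g(β̂, R̂, Ŷ, Ẑ)]`, with values in `[0,∞]`. -/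
noncomputable def Ez (g : ℝ → ℝ → ℝ → Z → ℝ) (z : Z) : ℝ≥0∞ :=
  ∑ zh, ENNReal.ofReal (M.P z zh) *
    ∫⁻ ε, ENNReal.ofReal (g (M.β z zh ε) (M.R z zh ε) (M.Y z zh ε) zh) ∂M.π

/-- Real-valued version of the conditional expectation operator. -/
noncomputable def EzR (g : ℝ → ℝ → ℝ → Z → ℝ) (z : Z) : ℝ := (M.Ez g z).toReal

/-- Assumption 2(i): finiteness of `E_z[u'(Ŷ,Ẑ)]` and `E_z[β̂ R̂ u'(Ŷ,Ẑ)]`. -/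
def Assumption2i : Prop :=
  ∀ z, M.Ez (fun _ _ y zh => M.u' y zh) z < ⊤ ∧
    M.Ez (fun b r y zh => b * r * M.u' y zh) z < ⊤

/-- The matrix `K(1)` with entries `P(z,zh) ∫ β(z,zh,ε) R(z,zh,ε) dπ(ε)`. -/
noncomputable def K1 : Matrix Z Z ℝ := fun z zh =>
  M.P z zh * (∫⁻ ε, ENNReal.ofReal (M.β z zh ε * M.R z zh ε) ∂M.π).toReal

/-- The candidate class `𝒞` of consumption functions. -/
def cC : Set (ℝ → Z → ℝ) :=
  {c | (∀ z, ContinuousOn (fun w => c w z) (Ioi 0)) ∧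
    (∀ z, MonotoneOn (fun w => c w z) (Ioi 0)) ∧
    (∀ z, ∀ w : ℝ, 0 < w → 0 < c w z ∧ c w z ≤ w) ∧
    (∃ B : ℝ, ∀ z, ∀ w : ℝ, 0 < w → |M.u' (c w z) z - M.u' w z| ≤ B)}

/-- The metric `ρ` on `𝒞`: supremum distance in marginal utility terms. -/
noncomputable def ρ (c₁ c₂ : ℝ → Z → ℝ) : ℝ :=
  sSup {x : ℝ | ∃ z : Z, ∃ w : ℝ, 0 < w ∧ x = |M.u' (c₁ w z) z - M.u' (c₂ w z) z|}

/-- State-wise supremum distance (in marginal utility terms) at state `z`. -/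
noncomputable def dz (c₁ c₂ : ℝ → Z → ℝ) (z : Z) : ℝ :=
  sSup {x : ℝ | ∃ w : ℝ, 0 < w ∧ x = |M.u' (c₁ w z) z - M.u' (c₂ w z) z|}

/-- `ξ` solves the time-iteration (Euler) equation at `(w, z)` given
continuation consumption `c`. -/
def IsEulerSol (c : ℝ → Z → ℝ) (w : ℝ) (z : Z) (ξ : ℝ) : Prop :=
  ξ ∈ Ioc 0 w ∧
    M.u' ξ z =
      max (M.EzR (fun b r y zh => b * r * M.u' (c (r * (w - ξ) + y) zh) zh) z) (M.u' w z)

/-- `Tc` is the image of `c` under the time iteration operator. -/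
def IsTimeIterOf (c Tc : ℝ → Z → ℝ) : Prop :=
  ∀ z : Z, ∀ w : ℝ, 0 < w → M.IsEulerSol c w z (Tc w z)

end SavingsModel

/-!
Consumption is monotone because `c*` lies in the candidate class. For savings, suppose
`a ≤ b` but `s(a) > s(b) > 0`, where `s(w) = w - c*(w,z)`. Then `c*(a,z) < c*(b,z)`, and since
both savings are positive the Euler equation binds at `a` and `b`. As next-period consumption is
increasing in wealth, the expected discounted marginal utility of saving is decreasing in the
amount saved, so `u'(c*(a,z)) ≤ u'(c*(b,z))`, contradicting strict concavity. The case
`s(b) = 0`, where the Euler equation at `b` need not bind, reduces to this one by the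
intermediate value theorem applied to the continuous function `s`.
-/

theorem ContinuousOn.apply_le_of_forall_pos_le {f : ℝ → ℝ} {a b : ℝ} (hab : a ≤ b)
    (hf : ContinuousOn f (Icc a b)) (hb : 0 ≤ f b)
    (h : ∀ w ∈ Icc a b, 0 < f w → f a ≤ f w) : f a ≤ f b := by
  by_contra! hlt
  obtain ⟨w, hw, hfw⟩ := intermediate_value_Icc' hab hf
    (show (f a + f b) / 2 ∈ Icc (f b) (f a) from ⟨by linarith, by linarith⟩)
  have := h w hw (by linarith)
  linarith

namespace SavingsModel

variable {Z E : Type} [Fintype Z] [MeasurableSpace E] (M : SavingsModel Z E)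

/-- `E_z[β̂ R̂ u'(c(R̂ s + Ŷ, Ẑ), Ẑ)]`, the right-hand side of the Euler equation at savings `s`. -/
noncomputable def marginalValueOfSavings (c : ℝ → Z → ℝ) (s : ℝ) (z : Z) : ℝ≥0∞ :=
  M.Ez (fun b r y zh => b * r * M.u' (c (r * s + y) zh) zh) z

theorem u'_strictAntiOn (z : Z) : StrictAntiOn (fun c => M.u' c z) (Ioi 0) := by
  apply strictAntiOn_of_deriv_neg (convex_Ioi 0)
  · exact fun x hx => (M.u'_deriv z x hx).continuousAt.continuousWithinAt
  · intro x hx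
    rw [interior_Ioi] at hx
    rw [(M.u'_deriv z x hx).deriv]
    exact M.u''_neg z x hx

theorem Ez_mono {g₁ g₂ : ℝ → ℝ → ℝ → Z → ℝ} (z : Z)
    (h : ∀ zh ε, g₁ (M.β z zh ε) (M.R z zh ε) (M.Y z zh ε) zh ≤
      g₂ (M.β z zh ε) (M.R z zh ε) (M.Y z zh ε) zh) :
    M.Ez g₁ z ≤ M.Ez g₂ z :=
  Finset.sum_le_sum fun zh _ =>
    mul_le_mul_right (lintegral_mono fun ε => ENNReal.ofReal_le_ofReal (h zh ε)) _

variable {M}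

theorem marginalValueOfSavings_antitoneOn {c : ℝ → Z → ℝ}
    (hmono : ∀ zh, MonotoneOn (fun w => c w zh) (Ioi 0))
    (hpos : ∀ zh w, 0 < w → 0 < c w zh) (z : Z) :
    AntitoneOn (fun s => M.marginalValueOfSavings c s z) (Ioi 0) := by
  intro s (hs : 0 < s) s' (hs' : 0 < s') hss'
  apply M.Ez_mono
  intro zh ε
  have hy := M.Y_nonneg z zh ε
  rcases (M.R_nonneg z zh ε).eq_or_lt with hr | hr
  · simp [← hr]
  have hw : 0 < M.R z zh ε * s + M.Y z zh ε := by positivity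
  have hw' : 0 < M.R z zh ε * s' + M.Y z zh ε := by positivity
  have hcons := hmono zh hw hw' (by gcongr)
  have hmu := (M.u'_strictAntiOn zh).antitoneOn (hpos zh _ hw) (hpos zh _ hw') hcons
  exact mul_le_mul_of_nonneg_left hmu (mul_nonneg (M.β_nonneg z zh ε) hr.le)

theorem IsEulerSol.u'_eq_of_lt {c : ℝ → Z → ℝ} {w ξ : ℝ} {z : Z}
    (h : M.IsEulerSol c w z ξ) (hξ : ξ < w) :
    M.u' ξ z = (M.marginalValueOfSavings c (w - ξ) z).toReal := by
  have hlt : M.u' w z < M.u' ξ z := M.u'_strictAntiOn z h.1.1 (h.1.1.trans hξ) hξ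
  rcases max_choice (M.EzR (fun b r y zh => b * r * M.u' (c (r * (w - ξ) + y) zh) zh) z)
    (M.u' w z) with hmax | hmax
  · exact h.2.trans hmax
  · exact absurd (h.2.trans hmax) hlt.ne'

theorem savings_le_of_pos {c : ℝ → Z → ℝ}
    (hmono : ∀ zh, MonotoneOn (fun w => c w zh) (Ioi 0))
    (hpos : ∀ zh w, 0 < w → 0 < c w zh) (hfix : M.IsTimeIterOf c c)
    {z : Z} {a b : ℝ} (ha : 0 < a) (hab : a ≤ b) (hsb : 0 < b - c b z) :
    a - c a z ≤ b - c b z := by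
  by_contra! hlt
  have hb := ha.trans_le hab
  have hEa := (hfix z a ha).u'_eq_of_lt (by linarith)
  have hEb := (hfix z b hb).u'_eq_of_lt (by linarith)
  have hfin : M.marginalValueOfSavings c (b - c b z) z ≠ ⊤ := by
    intro htop
    have := M.u'_pos z _ (hpos z b hb)
    simp [hEb, htop] at this
  have hmu : M.u' (c b z) z < M.u' (c a z) z :=
    M.u'_strictAntiOn z (hpos z a ha) (hpos z b hb) (by linarith)
  have hE := ENNReal.toReal_mono hfin
    (marginalValueOfSavings_antitoneOn hmono hpos z hsb (hsb.trans hlt) hlt.le)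
  linarith

end SavingsModel

theorem optimal_consumption_and_savings_monotone_general
    {Z E : Type} [Fintype Z] [MeasurableSpace E]
    (M : SavingsModel Z E)
    (cstar : ℝ → Z → ℝ) (hmem : cstar ∈ M.cC)
    (hfix : M.IsTimeIterOf cstar cstar) :
    ∀ z : Z, MonotoneOn (fun w => cstar w z) (Set.Ioi 0) ∧
      MonotoneOn (fun w => w - cstar w z) (Set.Ioi 0) := by
  intro z
  obtain ⟨hcont, hmono, hbound, -⟩ := hmem
  have hpos : ∀ zh w, 0 < w → 0 < cstar w zh := fun zh w hw => (hbound zh w hw).1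
  refine ⟨hmono z, fun a ha b hb hab => ?_⟩
  have hsavings : ContinuousOn (fun w => w - cstar w z) (Icc a b) :=
    continuousOn_id.sub ((hcont z).mono fun x hx => ha.trans_le hx.1)
  exact hsavings.apply_le_of_forall_pos_le hab (sub_nonneg.2 (hbound z b hb).2)
    fun w hw hsw => SavingsModel.savings_le_of_pos hmono hpos hfix ha hw.1 hsw

/-- Proposition (Monotonicity with respect to wealth): under Assumptions 1
and 2, the unique fixed point `c*` of the time iteration operator is such that
both the optimal consumption `w ↦ c*(w,z)` and the optimal savings
`w ↦ w − c*(w,z)` are increasing in `w` for every `z`. -/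
theorem optimal_consumption_and_savings_monotone
    {Z E : Type} [Fintype Z] [Nonempty Z] [DecidableEq Z] [MeasurableSpace E]
    (M : SavingsModel Z E)
    (h2i : M.Assumption2i) (h2ii : specRad M.K1 < 1)
    (cstar : ℝ → Z → ℝ) (hmem : cstar ∈ M.cC)
    (hfix : M.IsTimeIterOf cstar cstar) :
    ∀ z : Z, MonotoneOn (fun w => cstar w z) (Set.Ioi 0) ∧
      MonotoneOn (fun w => w - cstar w z) (Set.Ioi 0) :=
  optimal_consumption_and_savings_monotone_general M cstar hmem hfix
end

section
/- Under Assumption 1, the pair (𝒞, ρ) is a complete metric space: ρ is a metric on 𝒞, and every ρ-Cauchy sequence in 𝒞 converges in ρ to an element of 𝒞. -/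
open Set Filter

/-- The candidate class `𝒞` of consumption functions determined by the
marginal utility `u'`. -/
def candClass {Z : Type} (u' : ℝ → Z → ℝ) : Set (ℝ → Z → ℝ) :=
  {c | (∀ z, ContinuousOn (fun w => c w z) (Ioi 0)) ∧
    (∀ z, MonotoneOn (fun w => c w z) (Ioi 0)) ∧
    (∀ z, ∀ w : ℝ, 0 < w → 0 < c w z ∧ c w z ≤ w) ∧
    (∃ B : ℝ, ∀ z, ∀ w : ℝ, 0 < w → |u' (c w z) z - u' w z| ≤ B)}

/-- The supremum distance `ρ` in marginal utility terms. -/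
noncomputable def candDist {Z : Type} (u' : ℝ → Z → ℝ) (c₁ c₂ : ℝ → Z → ℝ) : ℝ :=
  sSup {x : ℝ | ∃ z : Z, ∃ w : ℝ, 0 < w ∧ x = |u' (c₁ w z) z - u' (c₂ w z) z|}

/-!
`ρ` is the uniform distance between the marginal-utility profiles `(w, z) ↦ u'(c(w, z), z)`,
so a `ρ`-Cauchy sequence has profiles converging uniformly on `S₀`. The limit profile `G`
dominates `u'(w, z)`, is antitone and continuous in `w`, and stays within bounded distance of
`u'(w, z)`. Because `u'(·, z)` is a continuous strictly decreasing map of `(0, ∞)` whose range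
contains `[u'(w, z), ∞)`, it can be inverted: `c(w, z) := u'(·, z)⁻¹ (G(w, z))` lies in
`(0, w]`, is increasing and continuous in `w`, and has profile `G`, so `c ∈ 𝒞` and the
sequence converges to `c` in `ρ`.
-/

section StrictAnti

variable {f : ℝ → ℝ}

theorem Ici_subset_image_Ioc_of_tendsto_atTop (hf : ContinuousOn f (Ioi 0))
    (hf₀ : Tendsto f (nhdsWithin 0 (Ioi 0)) atTop) {w : ℝ} (hw : 0 < w) :
    Ici (f w) ⊆ f '' Ioc 0 w :=
  have := left_nhdsWithin_Ioc_neBot hw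
  isPreconnected_Ioc.intermediate_value_Ici (l := nhdsWithin 0 (Ioc 0 w)) (right_mem_Ioc.2 hw)
    inf_le_right (hf.mono Ioc_subset_Ioi_self)
    (hf₀.mono_left (nhdsWithin_mono _ Ioc_subset_Ioi_self))

theorem StrictAntiOn.continuousOn_of_comp {g : ℝ → ℝ} {t : Set ℝ}
    (hf : StrictAntiOn f (Ioi 0)) (hg : MapsTo g t (Ioi 0)) (hfg : ContinuousOn (f ∘ g) t) :
    ContinuousOn g t := by
  intro w hw
  refine tendsto_order.2 ⟨fun a ha => ?_, fun b hb => ?_⟩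
  · rcases le_or_gt a 0 with ha₀ | ha₀
    · filter_upwards [self_mem_nhdsWithin] with v hv using ha₀.trans_lt (hg hv)
    · filter_upwards [self_mem_nhdsWithin,
        (tendsto_order.1 (hfg w hw)).2 _ (hf ha₀ (hg hw) ha)] with v hv hfv
      exact (hf.lt_iff_gt (hg hv) ha₀).1 hfv
  · have hb₀ : b ∈ Ioi 0 := (hg hw).trans hb
    filter_upwards [self_mem_nhdsWithin,
      (tendsto_order.1 (hfg w hw)).1 _ (hf (hg hw) hb₀ hb)] with v hv hfv
    exact (hf.lt_iff_gt hb₀ (hg hv)).1 hfv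

end StrictAnti

section CandDist

variable {Z : Type} {u' : ℝ → Z → ℝ} {c₁ c₂ c₃ : ℝ → Z → ℝ}

theorem abs_sub_le_candDist (h₁ : c₁ ∈ candClass u') (h₂ : c₂ ∈ candClass u') {z : Z} {w : ℝ}
    (hw : 0 < w) : |u' (c₁ w z) z - u' (c₂ w z) z| ≤ candDist u' c₁ c₂ := by
  obtain ⟨B₁, hB₁⟩ := h₁.2.2.2
  obtain ⟨B₂, hB₂⟩ := h₂.2.2.2
  refine le_csSup ⟨B₁ + B₂, ?_⟩ ⟨z, w, hw, rfl⟩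
  rintro _ ⟨z, w, hw, rfl⟩
  calc |u' (c₁ w z) z - u' (c₂ w z) z|
      ≤ |u' (c₁ w z) z - u' w z| + |u' w z - u' (c₂ w z) z| := abs_sub_le _ _ _
    _ ≤ B₁ + B₂ := add_le_add (hB₁ z w hw) (abs_sub_comm (u' w z) _ ▸ hB₂ z w hw)

theorem candDist_le {r : ℝ} (hr : 0 ≤ r)
    (h : ∀ z, ∀ w : ℝ, 0 < w → |u' (c₁ w z) z - u' (c₂ w z) z| ≤ r) :
    candDist u' c₁ c₂ ≤ r :=
  Real.sSup_le (by rintro _ ⟨z, w, hw, rfl⟩; exact h z w hw) hr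

theorem candDist_nonneg : 0 ≤ candDist u' c₁ c₂ :=
  Real.sSup_nonneg (by rintro _ ⟨z, w, -, rfl⟩; exact abs_nonneg _)

theorem candDist_self : candDist u' c₁ c₁ = 0 :=
  le_antisymm (candDist_le le_rfl fun z w _ => by simp) candDist_nonneg

theorem candDist_comm : candDist u' c₁ c₂ = candDist u' c₂ c₁ := by
  simp only [candDist, abs_sub_comm]

theorem candDist_triangle (h₁ : c₁ ∈ candClass u') (h₂ : c₂ ∈ candClass u')
    (h₃ : c₃ ∈ candClass u') : candDist u' c₁ c₃ ≤ candDist u' c₁ c₂ + candDist u' c₂ c₃ :=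
  candDist_le (add_nonneg candDist_nonneg candDist_nonneg) fun _ _ hw =>
    (abs_sub_le _ _ _).trans
      (add_le_add (abs_sub_le_candDist h₁ h₂ hw) (abs_sub_le_candDist h₂ h₃ hw))

theorem eq_of_candDist_eq_zero (hinj : ∀ z, InjOn (u' · z) (Ioi 0))
    (h₁ : c₁ ∈ candClass u') (h₂ : c₂ ∈ candClass u') (h : candDist u' c₁ c₂ = 0)
    {z : Z} {w : ℝ} (hw : 0 < w) : c₁ w z = c₂ w z := by
  have hle := abs_sub_le_candDist h₁ h₂ (z := z) hw
  rw [h, abs_nonpos_iff, sub_eq_zero] at hle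
  exact hinj z (h₁.2.2.1 z w hw).1 (h₂.2.2.1 z w hw).1 hle

end CandDist

section Completeness

variable {Z : Type} {u' : ℝ → Z → ℝ} {seq : ℕ → ℝ → Z → ℝ} {c : ℝ → Z → ℝ}

def marginalProfile (u' : ℝ → Z → ℝ) (c : ℝ → Z → ℝ) (p : ℝ × Z) : ℝ :=
  u' (c p.1 p.2) p.2

theorem exists_tendstoUniformlyOn_marginalProfile (hseq : ∀ n, seq n ∈ candClass u')
    (hcauchy : ∀ δ : ℝ, 0 < δ → ∃ N : ℕ, ∀ m ≥ N, ∀ n ≥ N, candDist u' (seq m) (seq n) < δ) :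
    ∃ G, TendstoUniformlyOn (fun n => marginalProfile u' (seq n)) G atTop {p | 0 < p.1} := by
  have hU : UniformCauchySeqOn (fun n => marginalProfile u' (seq n)) atTop {p | 0 < p.1} :=
    Metric.uniformCauchySeqOn_iff.2 fun ε hε =>
      let ⟨N, hN⟩ := hcauchy ε hε
      ⟨N, fun m hm n hn _ hp =>
        (abs_sub_le_candDist (hseq m) (hseq n) hp).trans_lt (hN m hm n hn)⟩
  exact ⟨fun p => limUnder atTop fun n => marginalProfile u' (seq n) p,
    hU.tendstoUniformlyOn_of_tendsto fun p hp => (hU.cauchySeq hp).tendsto_limUnder⟩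

theorem le_of_tendsto_marginalProfile (hanti : ∀ z, AntitoneOn (u' · z) (Ioi 0))
    (hseq : ∀ n, seq n ∈ candClass u') {y w : ℝ} {z : Z} (hw : 0 < w)
    (h : Tendsto (fun n => marginalProfile u' (seq n) (w, z)) atTop (nhds y)) : u' w z ≤ y :=
  ge_of_tendsto' h fun n =>
    hanti z ((hseq n).2.2.1 z w hw).1 hw ((hseq n).2.2.1 z w hw).2

theorem exists_marginalProfile_eq
    (hsurj : ∀ z, ∀ w : ℝ, 0 < w → Ici (u' w z) ⊆ (u' · z) '' Ioi 0)
    {G : ℝ × Z → ℝ} (hG : ∀ z, ∀ w : ℝ, 0 < w → u' w z ≤ G (w, z)) :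
    ∃ c : ℝ → Z → ℝ, (∀ z, ∀ w : ℝ, 0 < w → 0 < c w z) ∧
      EqOn (marginalProfile u' c) G {p | 0 < p.1} := by
  have hex (p : ℝ × Z) (hp : 0 < p.1) : ∃ x ∈ Ioi 0, u' x p.2 = G p :=
    hsurj p.2 p.1 hp (hG p.2 p.1 hp)
  exact ⟨fun w z => Function.invFunOn (u' · z) (Ioi 0) (G (w, z)),
    fun z w hw => Function.invFunOn_mem (hex (w, z) hw),
    fun p hp => Function.invFunOn_eq (hex p hp)⟩

theorem mem_candClass_of_tendstoUniformlyOn (hanti : ∀ z, StrictAntiOn (u' · z) (Ioi 0))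
    (hcont : ∀ z, ContinuousOn (u' · z) (Ioi 0)) (hseq : ∀ n, seq n ∈ candClass u')
    (hc : ∀ z, ∀ w : ℝ, 0 < w → 0 < c w z)
    (hU : TendstoUniformlyOn (fun n => marginalProfile u' (seq n)) (marginalProfile u' c) atTop
      {p | 0 < p.1}) :
    c ∈ candClass u' := by
  have hlim {w : ℝ} (z : Z) (hw : 0 < w) :=
    hU.tendsto_at (show (w, z) ∈ {p : ℝ × Z | 0 < p.1} from hw)
  refine ⟨fun z => ?_, fun z w₁ hw₁ w₂ hw₂ hle => ?_, fun z w hw => ⟨hc z w hw, ?_⟩, ?_⟩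
  · refine (hanti z).continuousOn_of_comp (fun w => hc z w)
      ((hU.comp (fun w => (w, z))).continuousOn (Eventually.of_forall fun n => ?_).frequently)
    exact (hcont z).comp ((hseq n).1 z) fun w hw => ((hseq n).2.2.1 z w hw).1
  · rw [← (hanti z).le_iff_ge (hc z w₂ hw₂) (hc z w₁ hw₁)]
    exact le_of_tendsto_of_tendsto' (hlim z hw₂) (hlim z hw₁) fun n =>
      (hanti z).antitoneOn ((hseq n).2.2.1 z w₁ hw₁).1 ((hseq n).2.2.1 z w₂ hw₂).1
        ((hseq n).2.1 z hw₁ hw₂ hle)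
  · rw [← (hanti z).le_iff_ge hw (hc z w hw)]
    exact le_of_tendsto_marginalProfile (fun z => (hanti z).antitoneOn) hseq hw (hlim z hw)
  · obtain ⟨N, hN⟩ := (Metric.tendstoUniformlyOn_iff.1 hU 1 one_pos).exists
    obtain ⟨B, hB⟩ := (hseq N).2.2.2
    refine ⟨1 + B, fun z w hw => ?_⟩
    calc |u' (c w z) z - u' w z|
        ≤ |u' (c w z) z - u' (seq N w z) z| + |u' (seq N w z) z - u' w z| := abs_sub_le _ _ _
      _ ≤ 1 + B := add_le_add (hN (w, z) hw).le (hB z w hw)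

theorem tendsto_candDist_of_tendstoUniformlyOn
    (hU : TendstoUniformlyOn (fun n => marginalProfile u' (seq n)) (marginalProfile u' c) atTop
      {p | 0 < p.1}) :
    Tendsto (fun n => candDist u' (seq n) c) atTop (nhds 0) := by
  refine tendsto_order.2 ⟨fun a ha => Eventually.of_forall fun n => ha.trans_le candDist_nonneg,
    fun ε hε => ?_⟩
  filter_upwards [Metric.tendstoUniformlyOn_iff.1 hU (ε / 2) (half_pos hε)] with n hn
  refine (candDist_le (half_pos hε).le fun z w hw => ?_).trans_lt (half_lt_self hε)
  rw [abs_sub_comm]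
  exact (hn (w, z) hw).le

end Completeness

theorem candClass_complete_metric_general
    {Z : Type}
    (u' u'' : ℝ → Z → ℝ)
    (u'_deriv : ∀ z, ∀ c : ℝ, 0 < c → HasDerivAt (fun x => u' x z) (u'' c z) c)
    (u''_neg : ∀ z, ∀ c : ℝ, 0 < c → u'' c z < 0)
    (u'_infty : ∀ z, Tendsto (fun c => u' c z) (nhdsWithin 0 (Ioi 0)) atTop) :
    (∀ c₁ ∈ candClass u', ∀ c₂ ∈ candClass u', 0 ≤ candDist u' c₁ c₂) ∧
    (∀ c ∈ candClass u', candDist u' c c = 0) ∧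
    (∀ c₁ ∈ candClass u', ∀ c₂ ∈ candClass u',
      candDist u' c₁ c₂ = 0 → ∀ (z : Z) (w : ℝ), 0 < w → c₁ w z = c₂ w z) ∧
    (∀ c₁ ∈ candClass u', ∀ c₂ ∈ candClass u',
      candDist u' c₁ c₂ = candDist u' c₂ c₁) ∧
    (∀ c₁ ∈ candClass u', ∀ c₂ ∈ candClass u', ∀ c₃ ∈ candClass u',
      candDist u' c₁ c₃ ≤ candDist u' c₁ c₂ + candDist u' c₂ c₃) ∧
    (∀ seq : ℕ → ℝ → Z → ℝ, (∀ n, seq n ∈ candClass u') →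
      (∀ δ : ℝ, 0 < δ → ∃ N : ℕ, ∀ m ≥ N, ∀ n ≥ N, candDist u' (seq m) (seq n) < δ) →
      ∃ c ∈ candClass u', Tendsto (fun n => candDist u' (seq n) c) atTop (nhds 0)) := by
  have hcont (z : Z) : ContinuousOn (u' · z) (Ioi 0) := fun x hx =>
    (u'_deriv z x hx).continuousAt.continuousWithinAt
  have hanti (z : Z) : StrictAntiOn (u' · z) (Ioi 0) :=
    strictAntiOn_of_hasDerivWithinAt_neg (convex_Ioi 0) (hcont z)
      (fun x hx => (u'_deriv z x (by simpa using hx)).hasDerivWithinAt)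
      (fun x hx => u''_neg z x (by simpa using hx))
  refine ⟨fun _ _ _ _ => candDist_nonneg, fun _ _ => candDist_self,
    fun _ h₁ _ h₂ h _ _ hw => eq_of_candDist_eq_zero (fun z => (hanti z).injOn) h₁ h₂ h hw,
    fun _ _ _ _ => candDist_comm, fun _ h₁ _ h₂ _ h₃ => candDist_triangle h₁ h₂ h₃,
    fun seq hseq hcauchy => ?_⟩
  obtain ⟨G, hU⟩ := exists_tendstoUniformlyOn_marginalProfile hseq hcauchy
  obtain ⟨c, hc, hcG⟩ := exists_marginalProfile_eq
    (fun z w hw => (Ici_subset_image_Ioc_of_tendsto_atTop (hcont z) (u'_infty z) hw).trans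
      (image_mono Ioc_subset_Ioi_self))
    (fun z w hw => le_of_tendsto_marginalProfile (fun z => (hanti z).antitoneOn) hseq hw
      (hU.tendsto_at hw))
  have hUc := hU.congr_right hcG.symm
  exact ⟨c, mem_candClass_of_tendstoUniformlyOn hanti hcont hseq hc hUc,
    tendsto_candDist_of_tendstoUniformlyOn hUc⟩

/-- Proposition (completeness of `(𝒞, ρ)`): under Assumption 1, `ρ` is a
metric on `𝒞` (nonnegative, zero on the diagonal, separating points of `S₀`,
symmetric, satisfying the triangle inequality), and every `ρ`-Cauchy sequence
in `𝒞` converges in `ρ` to an element of `𝒞`. -/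
theorem candClass_complete_metric
    {Z : Type} [Fintype Z] [Nonempty Z]
    (u u' u'' : ℝ → Z → ℝ)
    (u_deriv : ∀ z, ∀ c : ℝ, 0 < c → HasDerivAt (fun x => u x z) (u' c z) c)
    (u'_deriv : ∀ z, ∀ c : ℝ, 0 < c → HasDerivAt (fun x => u' x z) (u'' c z) c)
    (u'_pos : ∀ z, ∀ c : ℝ, 0 < c → 0 < u' c z)
    (u''_neg : ∀ z, ∀ c : ℝ, 0 < c → u'' c z < 0)
    (u'_infty : ∀ z, Tendsto (fun c => u' c z) (nhdsWithin 0 (Ioi 0)) atTop)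
    (u'_lt_one : ∀ z, ∀ᶠ c in atTop, u' c z < 1) :
    (∀ c₁ ∈ candClass u', ∀ c₂ ∈ candClass u', 0 ≤ candDist u' c₁ c₂) ∧
    (∀ c ∈ candClass u', candDist u' c c = 0) ∧
    (∀ c₁ ∈ candClass u', ∀ c₂ ∈ candClass u',
      candDist u' c₁ c₂ = 0 → ∀ (z : Z) (w : ℝ), 0 < w → c₁ w z = c₂ w z) ∧
    (∀ c₁ ∈ candClass u', ∀ c₂ ∈ candClass u',
      candDist u' c₁ c₂ = candDist u' c₂ c₁) ∧
    (∀ c₁ ∈ candClass u', ∀ c₂ ∈ candClass u', ∀ c₃ ∈ candClass u',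
      candDist u' c₁ c₃ ≤ candDist u' c₁ c₂ + candDist u' c₂ c₃) ∧
    (∀ seq : ℕ → ℝ → Z → ℝ, (∀ n, seq n ∈ candClass u') →
      (∀ δ : ℝ, 0 < δ → ∃ N : ℕ, ∀ m ≥ N, ∀ n ≥ N, candDist u' (seq m) (seq n) < δ) →
      ∃ c ∈ candClass u', Tendsto (fun n => candDist u' (seq n) c) atTop (nhds 0)) :=
  candClass_complete_metric_general u' u'' u'_deriv u''_neg u'_infty
end
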